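/- For n = 3 and 0 < R < 1/√2, with u, φ as above and L_u h = Σ a^{i j̄} h_{i j̄} the linearization of the determinant at D²u, there exists ε > 0 such that L_u φ ≤ 3·det(D²u) − ε everywhere on B_R(0) \ {z' = 0}, where 3·det(D²u) = 24/27 + (24/27)|z₁|². -/

import Mathlib

/-- Wirtinger derivative `∂u/∂z_j`, via the real Fréchet derivative. -/
noncomputable def wd {n : ℕ} (j : Fin n) (u : (Fin n → ℂ) → ℂ) (z : Fin n → ℂ) : ℂ :=
  (1 / 2) * (fderiv ℝ u z (Pi.single j 1) - Complex.I * fderiv ℝ u z (Pi.single j Complex.I))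

/-- Conjugate Wirtinger derivative `∂u/∂z̄_j`. -/
noncomputable def wdbar {n : ℕ} (j : Fin n) (u : (Fin n → ℂ) → ℂ) (z : Fin n → ℂ) : ℂ :=
  (1 / 2) * (fderiv ℝ u z (Pi.single j 1) + Complex.I * fderiv ℝ u z (Pi.single j Complex.I))

/-- Complex Hessian `(∂²u/∂z_i∂z̄_j)_{i,j}`. -/
noncomputable def cHess {n : ℕ} (u : (Fin n → ℂ) → ℂ) (z : Fin n → ℂ) :
    Matrix (Fin n) (Fin n) ℂ :=
  Matrix.of fun i j => wd i (fun w => wdbar j u w) z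

/-- Squared Euclidean norm of `z' = (z_2, …, z_n)`. -/
noncomputable def nsq' {n : ℕ} (z : Fin n → ℂ) : ℝ :=
  ∑ j ∈ Finset.univ.filter (fun j : Fin n => (j : ℕ) ≠ 0), Complex.normSq (z j)

open Complex

noncomputable section

abbrev E3 := Fin 3 → ℂ

def Sf (w : E3) : ℝ := Complex.normSq (w 1) + Complex.normSq (w 2)

def nclm (a : ℂ) : ℂ →L[ℝ] ℝ := (2*a.re) • Complex.reCLM + (2*a.im) • Complex.imCLM

lemma nclm_apply (a v : ℂ) : nclm a v = 2*a.re*v.re + 2*a.im*v.im := by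
  simp [nclm]

lemma hasFDerivAt_normSq (a : ℂ) : HasFDerivAt Complex.normSq (nclm a) a := by
  have h := ((Complex.reCLM.hasFDerivAt (x := a)).mul (Complex.reCLM.hasFDerivAt (x := a))).add
    ((Complex.imCLM.hasFDerivAt (x := a)).mul (Complex.imCLM.hasFDerivAt (x := a)))
  have hf : (⇑Complex.reCLM * ⇑Complex.reCLM + ⇑Complex.imCLM * ⇑Complex.imCLM : ℂ → ℝ)
      = Complex.normSq := by
    funext z; simp [Complex.normSq_apply]
  rw [hf] at h
  refine h.congr_fderiv ?_
  ext v
  simp [nclm]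
  ring

def prC (j : Fin 3) : E3 →L[ℝ] ℂ := ContinuousLinearMap.proj j

def DS (z : E3) : E3 →L[ℝ] ℝ := (nclm (z 1)).comp (prC 1) + (nclm (z 2)).comp (prC 2)

def DT (z : E3) : E3 →L[ℝ] ℝ := (nclm (z 0)).comp (prC 0)

lemma hasFDerivAt_Sf (z : E3) : HasFDerivAt Sf (DS z) z := by
  have h1 : HasFDerivAt (fun w : E3 => Complex.normSq (w 1)) ((nclm (z 1)).comp (prC 1)) z :=
    (hasFDerivAt_normSq (z 1)).comp z ((prC 1).hasFDerivAt)
  have h2 : HasFDerivAt (fun w : E3 => Complex.normSq (w 2)) ((nclm (z 2)).comp (prC 2)) z :=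
    (hasFDerivAt_normSq (z 2)).comp z ((prC 2).hasFDerivAt)
  exact h1.add h2

lemma hasFDerivAt_Tf (z : E3) : HasFDerivAt (fun w : E3 => Complex.normSq (w 0)) (DT z) z :=
  (hasFDerivAt_normSq (z 0)).comp z ((prC 0).hasFDerivAt)

lemma DS_single_0 (z : E3) (v : ℂ) : DS z (Pi.single 0 v) = 0 := by
  simp [DS, prC, Pi.single_apply]

lemma DS_single_1 (z : E3) (v : ℂ) : DS z (Pi.single 1 v) = 2*(z 1).re*v.re + 2*(z 1).im*v.im := by
  simp [DS, prC, Pi.single_apply, nclm_apply]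

lemma DS_single_2 (z : E3) (v : ℂ) : DS z (Pi.single 2 v) = 2*(z 2).re*v.re + 2*(z 2).im*v.im := by
  simp [DS, prC, Pi.single_apply, nclm_apply]

lemma DT_single_0 (z : E3) (v : ℂ) : DT z (Pi.single 0 v) = 2*(z 0).re*v.re + 2*(z 0).im*v.im := by
  simp [DT, prC, Pi.single_apply, nclm_apply]

lemma DT_single_1 (z : E3) (v : ℂ) : DT z (Pi.single 1 v) = 0 := by
  simp [DT, prC, Pi.single_apply]

lemma DT_single_2 (z : E3) (v : ℂ) : DT z (Pi.single 2 v) = 0 := by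
  simp [DT, prC, Pi.single_apply]

lemma prC_single (j k : Fin 3) (v : ℂ) : prC j (Pi.single k v) = if j = k then v else 0 := by
  simp [prC, Pi.single_apply, eq_comm]

lemma wd_eq {f : E3 → ℂ} {f' : E3 →L[ℝ] ℂ} {z : E3} (hf : HasFDerivAt f f' z) (j : Fin 3) :
    wd j f z = (1/2) * (f' (Pi.single j 1) - Complex.I * f' (Pi.single j Complex.I)) := by
  unfold wd; rw [hf.fderiv]

lemma wdbar_eq {f : E3 → ℂ} {f' : E3 →L[ℝ] ℂ} {z : E3} (hf : HasFDerivAt f f' z) (j : Fin 3) :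
    wdbar j f z = (1/2) * (f' (Pi.single j 1) + Complex.I * f' (Pi.single j Complex.I)) := by
  unfold wdbar; rw [hf.fderiv]

lemma wd_congr {f g : E3 → ℂ} {z : E3} (h : f =ᶠ[nhds z] g) (j : Fin 3) :
    wd j f z = wd j g z := by
  unfold wd; rw [h.fderiv_eq]

lemma mem_nhds_Sf {z : E3} (hz : 0 < Sf z) : {w : E3 | 0 < Sf w} ∈ nhds z := by
  have hc : Continuous Sf :=
    (Complex.continuous_normSq.comp (continuous_apply 1)).add
      (Complex.continuous_normSq.comp (continuous_apply 2))
  exact (isOpen_lt continuous_const hc).mem_nhds hz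

lemma nsq'_eq (z : E3) : nsq' z = Sf z := by
  rw [nsq', Finset.sum_filter, Fin.sum_univ_three]
  simp [Sf]

def Gu (z1 : Fin 3) (w : E3) : ℂ :=
  if z1 = 0 then (↑(Sf w ^ ((2:ℝ)/3)) : ℂ) * w 0
  else (2/3 : ℂ) * ↑(Sf w ^ (-(1/3) : ℝ)) * (1 + ↑(Complex.normSq (w 0))) * w z1

def Gp (R : ℝ) (z1 : Fin 3) (w : E3) : ℂ :=
  if z1 = 0 then 0
  else (2/3 : ℂ) * ↑(Sf w ^ (-(1/3) : ℝ)) * ((1 + R^2 - Sf w : ℝ) : ℂ) * w z1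
    - ↑(Sf w ^ ((2:ℝ)/3)) * w z1

lemma fin3_mk2 : (⟨2, by omega⟩ : Fin 3) = 2 := rfl

lemma wdbar_u {u : E3 → ℂ}
    (hu : ∀ z, u z = ((nsq' z ^ (1 - 1 / (3 : ℝ)) * (1 + Complex.normSq (z 0)) : ℝ) : ℂ))
    (j : Fin 3) (w : E3) (hw : 0 < Sf w) :
    wdbar j u w = Gu j w := by
  have hueq : u = fun w : E3 => ((Sf w ^ ((2:ℝ)/3) * (1 + Complex.normSq (w 0)) : ℝ) : ℂ) := by
    funext v
    rw [hu v, nsq'_eq, show (1 - 1/(3:ℝ)) = (2:ℝ)/3 by norm_num]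
  have h1 : HasFDerivAt (fun w : E3 => Sf w ^ ((2:ℝ)/3))
      ((((2:ℝ)/3) * Sf w ^ ((2:ℝ)/3 - 1)) • DS w) w :=
    (hasFDerivAt_Sf w).rpow_const (Or.inl hw.ne')
  have h2 : HasFDerivAt (fun w : E3 => 1 + Complex.normSq (w 0)) (DT w) w :=
    (hasFDerivAt_Tf w).const_add 1
  have h3 := h1.mul h2
  have h4 : HasFDerivAt
      (fun w : E3 => ((Sf w ^ ((2:ℝ)/3) * (1 + Complex.normSq (w 0)) : ℝ) : ℂ))
      (Complex.ofRealCLM.comp ((Sf w ^ ((2:ℝ)/3)) • DT w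
        + (1 + Complex.normSq (w 0)) • ((((2:ℝ)/3) * Sf w ^ ((2:ℝ)/3 - 1)) • DS w))) w :=
    Complex.ofRealCLM.hasFDerivAt.comp w h3
  rw [hueq, wdbar_eq h4 j]
  rw [show ((2:ℝ)/3 - 1) = -(1/3 : ℝ) by norm_num]
  fin_cases j
  all_goals simp only [Fin.mk_zero, Fin.mk_one, fin3_mk2, Gu, ContinuousLinearMap.comp_apply,
      ContinuousLinearMap.add_apply,
      ContinuousLinearMap.coe_smul', Pi.smul_apply, DS_single_0, DS_single_1, DS_single_2,
      DT_single_0, DT_single_1, DT_single_2, Complex.ofRealCLM_apply, smul_eq_mul,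
      Complex.one_re, Complex.one_im, Complex.I_re, Complex.I_im, reduceIte]
  all_goals apply Complex.ext
  all_goals simp [Complex.ofReal_mul, Complex.ofReal_add]
  all_goals ring

lemma wdbar_p {R : ℝ} {φ : E3 → ℂ}
    (hφ : ∀ z, φ z = ((nsq' z ^ (1 - 1 / (3 : ℝ)) * (1 + R ^ 2 - nsq' z) : ℝ) : ℂ))
    (j : Fin 3) (w : E3) (hw : 0 < Sf w) :
    wdbar j φ w = Gp R j w := by
  have hueq : φ = fun w : E3 => ((Sf w ^ ((2:ℝ)/3) * (1 + R^2 - Sf w) : ℝ) : ℂ) := by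
    funext v
    rw [hφ v, nsq'_eq, show (1 - 1/(3:ℝ)) = (2:ℝ)/3 by norm_num]
  have h1 : HasFDerivAt (fun w : E3 => Sf w ^ ((2:ℝ)/3))
      ((((2:ℝ)/3) * Sf w ^ ((2:ℝ)/3 - 1)) • DS w) w :=
    (hasFDerivAt_Sf w).rpow_const (Or.inl hw.ne')
  have h2 : HasFDerivAt (fun w : E3 => 1 + R^2 - Sf w) (-DS w) w :=
    (hasFDerivAt_Sf w).const_sub (1 + R^2)
  have h3 := h1.mul h2
  have h4 : HasFDerivAt
      (fun w : E3 => ((Sf w ^ ((2:ℝ)/3) * (1 + R^2 - Sf w) : ℝ) : ℂ))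
      (Complex.ofRealCLM.comp ((Sf w ^ ((2:ℝ)/3)) • (-DS w)
        + (1 + R^2 - Sf w) • ((((2:ℝ)/3) * Sf w ^ ((2:ℝ)/3 - 1)) • DS w))) w :=
    Complex.ofRealCLM.hasFDerivAt.comp w h3
  rw [hueq, wdbar_eq h4 j]
  rw [show ((2:ℝ)/3 - 1) = -(1/3 : ℝ) by norm_num]
  fin_cases j
  all_goals simp only [Fin.mk_zero, Fin.mk_one, fin3_mk2, Gp, ContinuousLinearMap.comp_apply,
      ContinuousLinearMap.add_apply,
      ContinuousLinearMap.neg_apply, ContinuousLinearMap.coe_smul', Pi.smul_apply,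
      DS_single_0, DS_single_1, DS_single_2,
      DT_single_0, DT_single_1, DT_single_2, Complex.ofRealCLM_apply, smul_eq_mul,
      Complex.one_re, Complex.one_im, Complex.I_re, Complex.I_im, reduceIte]
  all_goals apply Complex.ext
  all_goals simp [Complex.ofReal_mul, Complex.ofReal_add, Complex.ofReal_sub]
  all_goals ring

open ComplexConjugate in
def MU (z : E3) (Q : ℝ) : Matrix (Fin 3) (Fin 3) ℂ :=
  !![(z 1 * conj (z 1) + z 2 * conj (z 2)) * (Q:ℂ),
     2/3 * (Q:ℂ) * conj (z 0) * z 1,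
     2/3 * (Q:ℂ) * conj (z 0) * z 2;
     2/3 * (Q:ℂ) * conj (z 1) * z 0,
     (1 + z 0 * conj (z 0)) * (2/3 * (Q:ℂ) - 2/9 * (Q:ℂ)^4 * conj (z 1) * z 1),
     (1 + z 0 * conj (z 0)) * (-(2/9) * (Q:ℂ)^4 * conj (z 1) * z 2);
     2/3 * (Q:ℂ) * conj (z 2) * z 0,
     (1 + z 0 * conj (z 0)) * (-(2/9) * (Q:ℂ)^4 * conj (z 2) * z 1),
     (1 + z 0 * conj (z 0)) * (2/3 * (Q:ℂ) - 2/9 * (Q:ℂ)^4 * conj (z 2) * z 2)]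

open ComplexConjugate in
def MP (z : E3) (Q lam : ℝ) : Matrix (Fin 3) (Fin 3) ℂ :=
  !![0, 0, 0;
     0, 2/3*(Q:ℂ)*(lam:ℂ) - 5/3*(z 1 * conj (z 1) + z 2 * conj (z 2))*(Q:ℂ)
          - conj (z 1) * z 1 * (2/9*(Q:ℂ)^4*(lam:ℂ)
              - 2/9*(Q:ℂ)^4*(z 1 * conj (z 1) + z 2 * conj (z 2)) + 4/3*(Q:ℂ)),
        -(conj (z 1) * z 2 * (2/9*(Q:ℂ)^4*(lam:ℂ)
              - 2/9*(Q:ℂ)^4*(z 1 * conj (z 1) + z 2 * conj (z 2)) + 4/3*(Q:ℂ)));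
     0, -(conj (z 2) * z 1 * (2/9*(Q:ℂ)^4*(lam:ℂ)
              - 2/9*(Q:ℂ)^4*(z 1 * conj (z 1) + z 2 * conj (z 2)) + 4/3*(Q:ℂ))),
        2/3*(Q:ℂ)*(lam:ℂ) - 5/3*(z 1 * conj (z 1) + z 2 * conj (z 2))*(Q:ℂ)
          - conj (z 2) * z 2 * (2/9*(Q:ℂ)^4*(lam:ℂ)
              - 2/9*(Q:ℂ)^4*(z 1 * conj (z 1) + z 2 * conj (z 2)) + 4/3*(Q:ℂ))]

set_option maxHeartbeats 1000000 in
lemma cHess_u_eq {u : E3 → ℂ}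
    (hu : ∀ z, u z = ((nsq' z ^ (1 - 1 / (3 : ℝ)) * (1 + Complex.normSq (z 0)) : ℝ) : ℂ))
    (z : E3) (hz : 0 < Sf z) :
    cHess u z = MU z (Sf z ^ (-(1/3) : ℝ)) := by
  have hmem := mem_nhds_Sf hz
  have hP2 : Sf z ^ ((-(1/3) : ℝ) - 1) = (Sf z ^ (-(1/3) : ℝ))^(4:ℕ) := by
    rw [← Real.rpow_natCast (Sf z ^ (-(1/3) : ℝ)) 4, ← Real.rpow_mul hz.le]; norm_num
  have hP3 : Sf z ^ ((2:ℝ)/3) = Sf z * Sf z ^ (-(1/3) : ℝ) := by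
    rw [show ((2:ℝ)/3) = 1 + (-(1/3)) by norm_num, Real.rpow_add hz, Real.rpow_one]
  ext i j
  have hcongr : wd i (fun w => wdbar j u w) z = wd i (Gu j) z :=
    wd_congr (Filter.eventuallyEq_of_mem hmem (fun w hw => wdbar_u hu j w hw)) i
  rw [show (cHess u z) i j = wd i (fun w => wdbar j u w) z from rfl, hcongr]
  have h1 : HasFDerivAt (fun w : E3 => Sf w ^ ((2:ℝ)/3))
      ((((2:ℝ)/3) * Sf z ^ ((2:ℝ)/3 - 1)) • DS z) z :=
    (hasFDerivAt_Sf z).rpow_const (Or.inl hz.ne')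
  have hq : HasFDerivAt (fun w : E3 => Sf w ^ (-(1/3) : ℝ))
      ((-(1/3) * Sf z ^ ((-(1/3) : ℝ) - 1)) • DS z) z :=
    (hasFDerivAt_Sf z).rpow_const (Or.inl hz.ne')
  fin_cases j
  · -- j = 0
    have hgu : Gu 0 = fun w : E3 => ((Sf w ^ ((2:ℝ)/3) : ℝ) : ℂ) * w 0 := by
      funext w; simp [Gu]
    have h : HasFDerivAt (fun w : E3 => ((Sf w ^ ((2:ℝ)/3) : ℝ) : ℂ) * w 0)
        (((Sf z ^ ((2:ℝ)/3) : ℝ) : ℂ) • prC 0 +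
          (z 0) • (Complex.ofRealCLM.comp ((((2:ℝ)/3) * Sf z ^ ((2:ℝ)/3 - 1)) • DS z))) z :=
      ((Complex.ofRealCLM.hasFDerivAt.comp z h1).mul ((prC 0).hasFDerivAt))
    rw [Fin.mk_zero, hgu, wd_eq h]
    fin_cases i
    all_goals simp only [Fin.mk_zero, Fin.mk_one, fin3_mk2, ContinuousLinearMap.comp_apply,
        ContinuousLinearMap.add_apply, ContinuousLinearMap.coe_smul', Pi.smul_apply,
        DS_single_0, DS_single_1, DS_single_2, DT_single_0, DT_single_1, DT_single_2,
        prC_single, Complex.ofRealCLM_apply, smul_eq_mul, reduceIte,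
        show ((2:ℝ)/3 - 1) = -(1/3 : ℝ) by norm_num, hP2, hP3, MU]
    all_goals (try (left; trivial))
    all_goals apply Complex.ext
    all_goals simp [Sf, Complex.normSq_apply, Complex.ofReal_mul, Complex.ofReal_add,
          Complex.ofReal_pow]
    all_goals (first | ring | tauto | (ring_nf; tauto))
    all_goals tauto
  · -- j = 1
    have hgu : Gu 1 = fun w : E3 =>
        (2/3 : ℂ) * ((Sf w ^ (-(1/3) : ℝ) : ℝ) : ℂ) * (1 + ((Complex.normSq (w 0) : ℝ) : ℂ)) * w 1 := by
      funext w; simp [Gu]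
    have h : HasFDerivAt (fun w : E3 =>
        (2/3 : ℂ) * ((Sf w ^ (-(1/3) : ℝ) : ℝ) : ℂ) * (1 + ((Complex.normSq (w 0) : ℝ) : ℂ)) * w 1)
        (((2/3 : ℂ) * ((Sf z ^ (-(1/3) : ℝ) : ℝ) : ℂ) * (1 + ((Complex.normSq (z 0) : ℝ) : ℂ))) • prC 1 +
          (z 1) • (((2/3 : ℂ) * ((Sf z ^ (-(1/3) : ℝ) : ℝ) : ℂ)) • (Complex.ofRealCLM.comp (DT z)) +
            (1 + ((Complex.normSq (z 0) : ℝ) : ℂ)) •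
              ((2/3 : ℂ) • (Complex.ofRealCLM.comp ((-(1/3) * Sf z ^ ((-(1/3) : ℝ) - 1)) • DS z))))) z :=
      (((Complex.ofRealCLM.hasFDerivAt.comp z hq).const_mul (2/3 : ℂ)).mul
        ((Complex.ofRealCLM.hasFDerivAt.comp z (hasFDerivAt_Tf z)).const_add 1)).mul
        ((prC 1).hasFDerivAt)
    rw [Fin.mk_one, hgu, wd_eq h]
    fin_cases i
    all_goals simp only [Fin.mk_zero, Fin.mk_one, fin3_mk2, ContinuousLinearMap.comp_apply,
        ContinuousLinearMap.add_apply, ContinuousLinearMap.coe_smul', Pi.smul_apply,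
        DS_single_0, DS_single_1, DS_single_2, DT_single_0, DT_single_1, DT_single_2,
        prC_single, Complex.ofRealCLM_apply, smul_eq_mul, reduceIte,
        show ((2:ℝ)/3 - 1) = -(1/3 : ℝ) by norm_num, hP2, hP3, MU]
    all_goals (try (left; trivial))
    all_goals apply Complex.ext
    all_goals simp [Sf, Complex.normSq_apply, Complex.ofReal_mul, Complex.ofReal_add,
          Complex.ofReal_pow]
    all_goals (first | ring | tauto | (ring_nf; tauto))
    all_goals tauto
  · -- j = 2
    have hgu : Gu 2 = fun w : E3 =>
        (2/3 : ℂ) * ((Sf w ^ (-(1/3) : ℝ) : ℝ) : ℂ) * (1 + ((Complex.normSq (w 0) : ℝ) : ℂ)) * w 2 := by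
      funext w; simp [Gu]
    have h : HasFDerivAt (fun w : E3 =>
        (2/3 : ℂ) * ((Sf w ^ (-(1/3) : ℝ) : ℝ) : ℂ) * (1 + ((Complex.normSq (w 0) : ℝ) : ℂ)) * w 2)
        (((2/3 : ℂ) * ((Sf z ^ (-(1/3) : ℝ) : ℝ) : ℂ) * (1 + ((Complex.normSq (z 0) : ℝ) : ℂ))) • prC 2 +
          (z 2) • (((2/3 : ℂ) * ((Sf z ^ (-(1/3) : ℝ) : ℝ) : ℂ)) • (Complex.ofRealCLM.comp (DT z)) +
            (1 + ((Complex.normSq (z 0) : ℝ) : ℂ)) •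
              ((2/3 : ℂ) • (Complex.ofRealCLM.comp ((-(1/3) * Sf z ^ ((-(1/3) : ℝ) - 1)) • DS z))))) z :=
      (((Complex.ofRealCLM.hasFDerivAt.comp z hq).const_mul (2/3 : ℂ)).mul
        ((Complex.ofRealCLM.hasFDerivAt.comp z (hasFDerivAt_Tf z)).const_add 1)).mul
        ((prC 2).hasFDerivAt)
    rw [fin3_mk2, hgu, wd_eq h]
    fin_cases i
    all_goals simp only [Fin.mk_zero, Fin.mk_one, fin3_mk2, ContinuousLinearMap.comp_apply,
        ContinuousLinearMap.add_apply, ContinuousLinearMap.coe_smul', Pi.smul_apply,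
        DS_single_0, DS_single_1, DS_single_2, DT_single_0, DT_single_1, DT_single_2,
        prC_single, Complex.ofRealCLM_apply, smul_eq_mul, reduceIte,
        show ((2:ℝ)/3 - 1) = -(1/3 : ℝ) by norm_num, hP2, hP3, MU]
    all_goals (try (left; trivial))
    all_goals apply Complex.ext
    all_goals simp [Sf, Complex.normSq_apply, Complex.ofReal_mul, Complex.ofReal_add,
          Complex.ofReal_pow]
    all_goals (first | ring | tauto | (ring_nf; tauto))
    all_goals tauto

set_option maxHeartbeats 1000000 in
lemma cHess_p_eq {R : ℝ} {φ : E3 → ℂ}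
    (hφ : ∀ z, φ z = ((nsq' z ^ (1 - 1 / (3 : ℝ)) * (1 + R ^ 2 - nsq' z) : ℝ) : ℂ))
    (z : E3) (hz : 0 < Sf z) :
    cHess φ z = MP z (Sf z ^ (-(1/3) : ℝ)) (1 + R^2) := by
  have hmem := mem_nhds_Sf hz
  have hP2 : Sf z ^ ((-(1/3) : ℝ) - 1) = (Sf z ^ (-(1/3) : ℝ))^(4:ℕ) := by
    rw [← Real.rpow_natCast (Sf z ^ (-(1/3) : ℝ)) 4, ← Real.rpow_mul hz.le]; norm_num
  have hP3 : Sf z ^ ((2:ℝ)/3) = Sf z * Sf z ^ (-(1/3) : ℝ) := by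
    rw [show ((2:ℝ)/3) = 1 + (-(1/3)) by norm_num, Real.rpow_add hz, Real.rpow_one]
  ext i j
  have hcongr : wd i (fun w => wdbar j φ w) z = wd i (Gp R j) z :=
    wd_congr (Filter.eventuallyEq_of_mem hmem (fun w hw => wdbar_p hφ j w hw)) i
  rw [show (cHess φ z) i j = wd i (fun w => wdbar j φ w) z from rfl, hcongr]
  have h1 : HasFDerivAt (fun w : E3 => Sf w ^ ((2:ℝ)/3))
      ((((2:ℝ)/3) * Sf z ^ ((2:ℝ)/3 - 1)) • DS z) z :=
    (hasFDerivAt_Sf z).rpow_const (Or.inl hz.ne')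
  have hq : HasFDerivAt (fun w : E3 => Sf w ^ (-(1/3) : ℝ))
      ((-(1/3) * Sf z ^ ((-(1/3) : ℝ) - 1)) • DS z) z :=
    (hasFDerivAt_Sf z).rpow_const (Or.inl hz.ne')
  fin_cases j
  · have hgu : Gp R 0 = fun _ : E3 => (0:ℂ) := by funext w; simp [Gp]
    have h : HasFDerivAt (fun _ : E3 => (0:ℂ)) (0 : E3 →L[ℝ] ℂ) z := hasFDerivAt_const 0 z
    rw [Fin.mk_zero, hgu, wd_eq h]
    fin_cases i <;> simp [MP, Matrix.vecHead, Matrix.vecTail]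
  · have hgu : Gp R 1 = fun w : E3 =>
        (2/3 : ℂ) * ((Sf w ^ (-(1/3) : ℝ) : ℝ) : ℂ) * ((1 + R^2 - Sf w : ℝ) : ℂ) * w 1
          - ((Sf w ^ ((2:ℝ)/3) : ℝ) : ℂ) * w 1 := by
      funext w; simp [Gp]
    have h : HasFDerivAt (fun w : E3 =>
        (2/3 : ℂ) * ((Sf w ^ (-(1/3) : ℝ) : ℝ) : ℂ) * ((1 + R^2 - Sf w : ℝ) : ℂ) * w 1
          - ((Sf w ^ ((2:ℝ)/3) : ℝ) : ℂ) * w 1)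
        ((((2/3 : ℂ) * ((Sf z ^ (-(1/3) : ℝ) : ℝ) : ℂ) * ((1 + R^2 - Sf z : ℝ) : ℂ)) • prC 1
          + (z 1) • (((2/3 : ℂ) * ((Sf z ^ (-(1/3) : ℝ) : ℝ) : ℂ)) • (Complex.ofRealCLM.comp (-(DS z)))
            + (((1 + R^2 - Sf z : ℝ) : ℂ)) • ((2/3 : ℂ) • (Complex.ofRealCLM.comp ((-(1/3) * Sf z ^ ((-(1/3) : ℝ) - 1)) • DS z)))))
         - ((((Sf z ^ ((2:ℝ)/3) : ℝ) : ℂ)) • prC 1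
          + (z 1) • (Complex.ofRealCLM.comp ((((2:ℝ)/3) * Sf z ^ ((2:ℝ)/3 - 1)) • DS z)))) z :=
      (((((Complex.ofRealCLM.hasFDerivAt.comp z hq).const_mul (2/3 : ℂ)).mul
        (Complex.ofRealCLM.hasFDerivAt.comp z ((hasFDerivAt_Sf z).const_sub (1 + R^2)))).mul
        ((prC 1).hasFDerivAt)).sub
        ((Complex.ofRealCLM.hasFDerivAt.comp z h1).mul ((prC 1).hasFDerivAt)))
    rw [Fin.mk_one, hgu, wd_eq h]
    fin_cases i
    all_goals simp only [Fin.mk_zero, Fin.mk_one, fin3_mk2, ContinuousLinearMap.comp_apply,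
        ContinuousLinearMap.add_apply, ContinuousLinearMap.sub_apply,
        ContinuousLinearMap.neg_apply, ContinuousLinearMap.coe_smul', Pi.smul_apply,
        DS_single_0, DS_single_1, DS_single_2, DT_single_0, DT_single_1, DT_single_2,
        prC_single, Complex.ofRealCLM_apply, smul_eq_mul, reduceIte,
        show ((2:ℝ)/3 - 1) = -(1/3 : ℝ) by norm_num, hP2, hP3, MP]
    all_goals (try (left; trivial))
    all_goals apply Complex.ext
    all_goals simp [Sf, Complex.normSq_apply, Complex.ofReal_mul, Complex.ofReal_add,
          Complex.ofReal_pow, Complex.ofReal_sub]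
    all_goals (first | ring | tauto | (ring_nf; tauto))
    all_goals tauto
  · have hgu : Gp R 2 = fun w : E3 =>
        (2/3 : ℂ) * ((Sf w ^ (-(1/3) : ℝ) : ℝ) : ℂ) * ((1 + R^2 - Sf w : ℝ) : ℂ) * w 2
          - ((Sf w ^ ((2:ℝ)/3) : ℝ) : ℂ) * w 2 := by
      funext w; simp [Gp]
    have h : HasFDerivAt (fun w : E3 =>
        (2/3 : ℂ) * ((Sf w ^ (-(1/3) : ℝ) : ℝ) : ℂ) * ((1 + R^2 - Sf w : ℝ) : ℂ) * w 2
          - ((Sf w ^ ((2:ℝ)/3) : ℝ) : ℂ) * w 2)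
        ((((2/3 : ℂ) * ((Sf z ^ (-(1/3) : ℝ) : ℝ) : ℂ) * ((1 + R^2 - Sf z : ℝ) : ℂ)) • prC 2
          + (z 2) • (((2/3 : ℂ) * ((Sf z ^ (-(1/3) : ℝ) : ℝ) : ℂ)) • (Complex.ofRealCLM.comp (-(DS z)))
            + (((1 + R^2 - Sf z : ℝ) : ℂ)) • ((2/3 : ℂ) • (Complex.ofRealCLM.comp ((-(1/3) * Sf z ^ ((-(1/3) : ℝ) - 1)) • DS z)))))
         - ((((Sf z ^ ((2:ℝ)/3) : ℝ) : ℂ)) • prC 2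
          + (z 2) • (Complex.ofRealCLM.comp ((((2:ℝ)/3) * Sf z ^ ((2:ℝ)/3 - 1)) • DS z)))) z :=
      (((((Complex.ofRealCLM.hasFDerivAt.comp z hq).const_mul (2/3 : ℂ)).mul
        (Complex.ofRealCLM.hasFDerivAt.comp z ((hasFDerivAt_Sf z).const_sub (1 + R^2)))).mul
        ((prC 2).hasFDerivAt)).sub
        ((Complex.ofRealCLM.hasFDerivAt.comp z h1).mul ((prC 2).hasFDerivAt)))
    rw [fin3_mk2, hgu, wd_eq h]
    fin_cases i
    all_goals simp only [Fin.mk_zero, Fin.mk_one, fin3_mk2, ContinuousLinearMap.comp_apply,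
        ContinuousLinearMap.add_apply, ContinuousLinearMap.sub_apply,
        ContinuousLinearMap.neg_apply, ContinuousLinearMap.coe_smul', Pi.smul_apply,
        DS_single_0, DS_single_1, DS_single_2, DT_single_0, DT_single_1, DT_single_2,
        prC_single, Complex.ofRealCLM_apply, smul_eq_mul, reduceIte,
        show ((2:ℝ)/3 - 1) = -(1/3 : ℝ) by norm_num, hP2, hP3, MP]
    all_goals (try (left; trivial))
    all_goals apply Complex.ext
    all_goals simp [Sf, Complex.normSq_apply, Complex.ofReal_mul, Complex.ofReal_add,
          Complex.ofReal_pow, Complex.ofReal_sub]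
    all_goals (first | ring | tauto | (ring_nf; tauto))
    all_goals tauto

open ComplexConjugate in
set_option maxHeartbeats 1000000 in
lemma det_MU (z : E3) (Q : ℝ)
    (h : ((Q:ℂ))^3 * (z 1 * conj (z 1) + z 2 * conj (z 2)) = 1) :
    (MU z Q).det = 8/27 + 8/27 * (z 0 * conj (z 0)) := by
  rw [Matrix.det_fin_three]
  simp [MU, Matrix.vecHead, Matrix.vecTail]
  linear_combination ((8/27) + (8/27)*z 0*conj (z 0) + (-4/27)*(Q:ℂ)^3*z 2*conj (z 2) + (-8/27)*(Q:ℂ)^3*z 2*conj (z 2)*z 0*conj (z 0) + (-4/27)*(Q:ℂ)^3*z 2*conj (z 2)*z 0^2*conj (z 0)^2 + (-4/27)*(Q:ℂ)^3*z 1*conj (z 1) + (-8/27)*(Q:ℂ)^3*z 1*conj (z 1)*z 0*conj (z 0) + (-4/27)*(Q:ℂ)^3*z 1*conj (z 1)*z 0^2*conj (z 0)^2) * h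

open ComplexConjugate in
set_option maxHeartbeats 4000000 in
lemma trace_MU_MP (z : E3) (Q lam : ℝ)
    (h : ((Q:ℂ))^3 * (z 1 * conj (z 1) + z 2 * conj (z 2)) = 1) :
    Matrix.trace ((MU z Q).adjugate * MP z Q lam)
      = ((16/27*lam + 8/27*Complex.normSq (z 0)*lam
          - (70/27 + 50/27*Complex.normSq (z 0))
            * (Complex.normSq (z 1) + Complex.normSq (z 2)) : ℝ) : ℂ) := by
  push_cast [← Complex.mul_conj]
  rw [Matrix.trace_fin_three, Matrix.adjugate_fin_three]
  simp only [Matrix.mul_apply, Fin.sum_univ_three]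
  simp [MU, MP, Matrix.vecHead, Matrix.vecTail]
  linear_combination ((16/27)*(lam:ℂ) + (8/27)*z 0*conj (z 0)*(lam:ℂ) + (-70/27)*z 2*conj (z 2) + (-50/27)*z 2*conj (z 2)*z 0*conj (z 0) + (-70/27)*z 1*conj (z 1) + (-50/27)*z 1*conj (z 1)*z 0*conj (z 0) + (-8/27)*(Q:ℂ)^3*z 2*conj (z 2)*(lam:ℂ) + (-8/27)*(Q:ℂ)^3*z 2*conj (z 2)*z 0*conj (z 0)*(lam:ℂ) + (14/27)*(Q:ℂ)^3*z 2^2*conj (z 2)^2 + (14/27)*(Q:ℂ)^3*z 2^2*conj (z 2)^2*z 0*conj (z 0) + (-8/27)*(Q:ℂ)^3*z 1*conj (z 1)*(lam:ℂ) + (-8/27)*(Q:ℂ)^3*z 1*conj (z 1)*z 0*conj (z 0)*(lam:ℂ) + (28/27)*(Q:ℂ)^3*z 1*conj (z 1)*z 2*conj (z 2) + (28/27)*(Q:ℂ)^3*z 1*conj (z 1)*z 2*conj (z 2)*z 0*conj (z 0) + (14/27)*(Q:ℂ)^3*z 1^2*conj (z 1)^2 + (14/27)*(Q:ℂ)^3*z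 1^2*conj (z 1)^2*z 0*conj (z 0)) * h

set_option maxHeartbeats 1000000 in
/-- For `n = 3` and `0 < R < 1/√2`, with `u(z) = ‖z'‖^{4/3}(1+|z₁|²)`,
`φ(z) = ‖z'‖^{4/3}(1+R²-‖z'‖²)` and `L_u h = Σ a^{i j̄} h_{i j̄} = trace(adj(D²u)·D²h)`
the linearization of the determinant at `D²u`: there exists `ε > 0` such that
`L_u φ ≤ 3·det(D²u) - ε` on `B_R(0) \\ {z' = 0}`, where
`3·det(D²u) = 24/27 + (24/27)|z₁|²`. -/
theorem stmt14 (R : ℝ) (hR0 : 0 < R) (hR : R < 1 / Real.sqrt 2)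
    (u φ : (Fin 3 → ℂ) → ℂ)
    (hu : ∀ z, u z = ((nsq' z ^ (1 - 1 / (3 : ℝ)) * (1 + Complex.normSq (z 0)) : ℝ) : ℂ))
    (hφ : ∀ z, φ z = ((nsq' z ^ (1 - 1 / (3 : ℝ)) * (1 + R ^ 2 - nsq' z) : ℝ) : ℂ)) :
    ∃ ε > (0 : ℝ), ∀ z : Fin 3 → ℂ,
      Complex.normSq (z 0) + nsq' z < R ^ 2 →
      (∃ j : Fin 3, (j : ℕ) ≠ 0 ∧ z j ≠ 0) →
      3 * (cHess u z).det = ((24 / 27 + 24 / 27 * Complex.normSq (z 0) : ℝ) : ℂ) ∧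
      (Matrix.trace ((cHess u z).adjugate * cHess φ z)).re ≤
        24 / 27 + 24 / 27 * Complex.normSq (z 0) - ε := by
  have hs2 : (0:ℝ) < Real.sqrt 2 := by positivity
  have hR' : R * Real.sqrt 2 < 1 := (lt_div_iff₀ hs2).mp hR
  have hR2 : R^2 < 1/2 := by
    nlinarith [Real.sq_sqrt (show (0:ℝ) ≤ 2 by norm_num), mul_nonneg hR0.le hs2.le]
  refine ⟨8/27 - 16/27*R^2, by nlinarith, ?_⟩
  intro z hball hex
  obtain ⟨j, hj0, hjz⟩ := hex
  have hz : 0 < Sf z := by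
    have h1 : 0 ≤ Complex.normSq (z 1) := Complex.normSq_nonneg _
    have h2 : 0 ≤ Complex.normSq (z 2) := Complex.normSq_nonneg _
    fin_cases j
    · simp at hj0
    · have h3 : 0 < Complex.normSq (z 1) := Complex.normSq_pos.mpr hjz
      rw [Sf]; linarith
    · have h3 : 0 < Complex.normSq (z 2) := Complex.normSq_pos.mpr hjz
      rw [Sf]; linarith
  have hSc : ((Sf z : ℝ) : ℂ) = z 1 * (starRingEnd ℂ) (z 1) + z 2 * (starRingEnd ℂ) (z 2) := by
    simp [Sf, Complex.mul_conj]
  have h1 : (Sf z ^ (-(1/3) : ℝ))^(3:ℕ) * Sf z = 1 := by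
    rw [← Real.rpow_natCast (Sf z ^ (-(1/3) : ℝ)) 3, ← Real.rpow_mul hz.le]
    rw [show (-(1/3) : ℝ) * (3:ℕ) = -1 by norm_num, Real.rpow_neg_one]
    exact inv_mul_cancel₀ hz.ne'
  have hrel : (((Sf z ^ (-(1/3) : ℝ) : ℝ) : ℂ))^3
      * (z 1 * (starRingEnd ℂ) (z 1) + z 2 * (starRingEnd ℂ) (z 2)) = 1 := by
    rw [← hSc, show ((((Sf z ^ (-(1/3) : ℝ) : ℝ)):ℂ))^3 = (((Sf z ^ (-(1/3) : ℝ))^(3:ℕ) : ℝ) : ℂ) by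
      push_cast; ring]
    rw [← Complex.ofReal_mul, h1, Complex.ofReal_one]
  constructor
  · rw [cHess_u_eq hu z hz, det_MU z _ hrel]
    push_cast [← Complex.mul_conj]
    ring
  · rw [cHess_u_eq hu z hz, cHess_p_eq hφ z hz, trace_MU_MP z _ (1+R^2) hrel,
      Complex.ofReal_re]
    have ht : 0 ≤ Complex.normSq (z 0) := Complex.normSq_nonneg _
    have hB : 0 ≤ Complex.normSq (z 1) := Complex.normSq_nonneg _
    have hC : 0 ≤ Complex.normSq (z 2) := Complex.normSq_nonneg _
    nlinarith [mul_le_mul_of_nonneg_left hR2.le ht, mul_nonneg ht hB, mul_nonneg ht hC,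
      mul_nonneg hB ht, mul_nonneg hC ht]

end
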